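/- Let k ≥ 1 and x_1,…,x_{2k-1} ∈ [0,1], and let Q(x_1,…,x_{2k-1}) = ℙ[y_i < x_i for at least k indices i], with y_1,…,y_{2k-1} i.i.d. uniform on [0,1]. Then Q(x_1,…,x_{2k-1}) ≥ σ_k(x_1,…,x_{2k-1}) − 2^{4k-2} · σ_k(x_1,…,x_{2k-1})^{(k+1)/k}. -/

import Mathlib

/-!
For `S ⊆ [n]` let `w S = ∏_{i ∈ S} x_i ∏_{i ∉ S} (1 - x_i)` be the probability that the indices
with `y_i < x_i` are exactly those of `S`; it is the volume of a box, and these boxes are disjoint.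
Expanding every monomial of `σ_ℓ` over the patterns containing it gives
`σ_ℓ = ∑_S C(|S|, ℓ) w S`, while `Q ≥ ∑_{|S| ≥ k} w S`. Since `C(s, k) ≤ [k ≤ s] + (k + 1) C(s, k + 1)`,
this yields `σ_k ≤ Q + (k + 1) σ_{k+1}`. Finally each monomial of degree `k + 1` is at most
`σ_k ^ ((k + 1) / k)`, as its `k`-th power is the product of its `k + 1` submonomials of degree `k`,
and `(k + 1) C(2k - 1, k + 1) ≤ 2 ^ (4k - 2)`.
-/

open MeasureTheory

def esymm (m ℓ : ℕ) (x : Fin m → ℝ) : ℝ :=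
  ∑ I ∈ Finset.powersetCard ℓ (Finset.univ : Finset (Fin m)), ∏ i ∈ I, x i

/-- `Q k x` is the probability that independent uniform random variables
`y i ∈ [0,1]` satisfy `y i < x i` for at least `k` indices `i`. -/
noncomputable def Q (k : ℕ) (x : Fin (2*k-1) → ℝ) : ℝ :=
  (volume {y : Fin (2*k-1) → ℝ |
      (∀ i, y i ∈ Set.Icc (0:ℝ) 1) ∧
        k ≤ (Finset.univ.filter (fun i => y i < x i)).card}).toReal

open Finset

theorem Nat.choose_le_ite_add_succ_mul_choose_succ (s k : ℕ) :
    s.choose k ≤ (if k ≤ s then 1 else 0) + (k + 1) * s.choose (k + 1) := by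
  rcases lt_trichotomy s k with hlt | rfl | hgt
  · simp [Nat.choose_eq_zero_of_lt hlt]
  · simp
  · calc s.choose k ≤ s.choose k * (s - k) := Nat.le_mul_of_pos_right _ (by omega)
      _ = (k + 1) * s.choose (k + 1) := by rw [← Nat.choose_succ_right_eq, mul_comm]
      _ ≤ _ := Nat.le_add_left _ _

theorem Nat.succ_mul_choose_succ_le_two_pow (n k : ℕ) :
    (k + 1) * n.choose (k + 1) ≤ 2 ^ (k + n) := by
  rw [pow_add]
  exact Nat.mul_le_mul Nat.lt_two_pow_self (Nat.choose_le_two_pow n (k + 1))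

section

variable {n : ℕ}

def patternWeight (x : Fin n → ℝ) (S : Finset (Fin n)) : ℝ :=
  (∏ i ∈ S, x i) * ∏ i ∈ Sᶜ, (1 - x i)

theorem patternWeight_nonneg {x : Fin n → ℝ} (hx : ∀ i, x i ∈ Set.Icc (0:ℝ) 1)
    (S : Finset (Fin n)) : 0 ≤ patternWeight x S :=
  mul_nonneg (prod_nonneg fun i _ => (hx i).1) (prod_nonneg fun i _ => sub_nonneg.2 (hx i).2)

theorem sum_patternWeight_of_subset (x : Fin n → ℝ) (T : Finset (Fin n)) :
    ∑ S with T ⊆ S, patternWeight x S = ∏ i ∈ T, x i := by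
  have hunion : ∀ U ∈ Tᶜ.powerset, patternWeight x (T ∪ U)
      = (∏ i ∈ T, x i) * ((∏ i ∈ U, x i) * ∏ i ∈ Tᶜ \ U, (1 - x i)) := by
    intro U hU
    have hdisj : Disjoint T U := disjoint_compl_right.mono_right (mem_powerset.1 hU)
    have hcompl : (T ∪ U)ᶜ = Tᶜ \ U := by ext; simp
    rw [patternWeight, prod_union hdisj, hcompl, mul_assoc]
  calc ∑ S with T ⊆ S, patternWeight x S = ∑ U ∈ Tᶜ.powerset, patternWeight x (T ∪ U) := by
        refine sum_nbij' (· \ T) (T ∪ ·) (fun S _ => ?_) (fun U _ => ?_) (fun S hS => ?_)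
          (fun U hU => ?_) (fun S hS => ?_) <;>
          simp only [mem_filter, mem_univ, true_and, mem_powerset] at *
        · exact fun i hi => mem_compl.2 (mem_sdiff.1 hi).2
        · exact subset_union_left
        · exact union_sdiff_of_subset hS
        · exact union_sdiff_cancel_left (disjoint_compl_right.mono_right hU)
        · rw [union_sdiff_of_subset hS]
    _ = ∏ i ∈ T, x i := by
        rw [sum_congr rfl hunion, ← mul_sum, ← prod_add]
        simp

theorem esymm_eq_sum_choose_mul_patternWeight (x : Fin n → ℝ) (ℓ : ℕ) :
    esymm n ℓ x = ∑ S, (S.card.choose ℓ : ℝ) * patternWeight x S := by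
  calc esymm n ℓ x = ∑ T ∈ powersetCard ℓ univ, ∑ S with T ⊆ S, patternWeight x S := by
        simp only [esymm, sum_patternWeight_of_subset]
    _ = ∑ S, ∑ _T ∈ powersetCard ℓ S, patternWeight x S := by
        refine sum_comm' fun T S => ?_
        simp only [mem_filter, mem_univ, true_and, mem_powersetCard, subset_univ]
        tauto
    _ = ∑ S, (S.card.choose ℓ : ℝ) * patternWeight x S := by
        simp only [sum_const, card_powersetCard, nsmul_eq_mul]

theorem esymm_le_sum_patternWeight_add {x : Fin n → ℝ} (hx : ∀ i, x i ∈ Set.Icc (0:ℝ) 1)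
    (k : ℕ) :
    esymm n k x ≤ ∑ S with k ≤ S.card, patternWeight x S + (k + 1) * esymm n (k + 1) x := by
  rw [esymm_eq_sum_choose_mul_patternWeight, esymm_eq_sum_choose_mul_patternWeight, mul_sum,
    sum_filter, ← sum_add_distrib]
  refine sum_le_sum fun S _ => ?_
  have hchoose : (S.card.choose k : ℝ) ≤ (if k ≤ S.card then 1 else 0)
      + (k + 1) * (S.card.choose (k + 1) : ℝ) := by
    exact_mod_cast Nat.choose_le_ite_add_succ_mul_choose_succ S.card k
  calc (S.card.choose k : ℝ) * patternWeight x S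
      ≤ ((if k ≤ S.card then 1 else 0) + (k + 1) * (S.card.choose (k + 1) : ℝ))
          * patternWeight x S := mul_le_mul_of_nonneg_right hchoose (patternWeight_nonneg hx S)
    _ = _ := by split_ifs <;> ring

theorem esymm_nonneg {x : Fin n → ℝ} (hx : ∀ i, 0 ≤ x i) (ℓ : ℕ) : 0 ≤ esymm n ℓ x :=
  sum_nonneg fun _ _ => prod_nonneg fun i _ => hx i

theorem prod_pow_le_esymm_pow_succ {x : Fin n → ℝ} (hx : ∀ i, 0 ≤ x i) {k : ℕ}
    {T : Finset (Fin n)} (hT : T.card = k + 1) :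
    (∏ i ∈ T, x i) ^ k ≤ esymm n k x ^ (k + 1) := by
  set a := ∏ i ∈ T, x i
  have ha : 0 ≤ a := prod_nonneg fun i _ => hx i
  rcases ha.eq_or_lt with ha0 | hapos
  · rw [← ha0]
    rcases k.eq_zero_or_pos with rfl | hk
    · simp [esymm]
    · rw [zero_pow hk.ne']
      exact pow_nonneg (esymm_nonneg hx k) _
  have herase : ∀ j ∈ T, ∏ i ∈ T.erase j, x i ≤ esymm n k x := fun j hj =>
    single_le_sum (f := fun I => ∏ i ∈ I, x i) (fun I _ => prod_nonneg fun i _ => hx i)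
      (mem_powersetCard.2 ⟨subset_univ _, by rw [card_erase_of_mem hj, hT, Nat.add_sub_cancel]⟩)
  refine le_of_mul_le_mul_left ?_ hapos
  calc a * a ^ k = ∏ j ∈ T, x j * ∏ i ∈ T.erase j, x i := by
        rw [← pow_succ', prod_congr rfl fun j hj => mul_prod_erase T x hj, prod_const, hT]
    _ = a * ∏ j ∈ T, ∏ i ∈ T.erase j, x i := prod_mul_distrib
    _ ≤ a * esymm n k x ^ (k + 1) := by
        rw [← hT, ← prod_const]
        exact mul_le_mul_of_nonneg_left
          (prod_le_prod (fun j _ => prod_nonneg fun i _ => hx i) herase) ha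

theorem prod_le_esymm_rpow {x : Fin n → ℝ} (hx : ∀ i, 0 ≤ x i) {k : ℕ} (hk : k ≠ 0)
    {T : Finset (Fin n)} (hT : T.card = k + 1) :
    ∏ i ∈ T, x i ≤ esymm n k x ^ (((k : ℝ) + 1) / k) := by
  have hσ := esymm_nonneg hx k
  calc ∏ i ∈ T, x i = ((∏ i ∈ T, x i) ^ k) ^ (k⁻¹ : ℝ) :=
        (Real.pow_rpow_inv_natCast (prod_nonneg fun i _ => hx i) hk).symm
    _ ≤ (esymm n k x ^ (k + 1)) ^ (k⁻¹ : ℝ) :=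
        Real.rpow_le_rpow (pow_nonneg (prod_nonneg fun i _ => hx i) k)
          (prod_pow_le_esymm_pow_succ hx hT) (by positivity)
    _ = esymm n k x ^ (((k : ℝ) + 1) / k) := by
        rw [← Real.rpow_natCast, ← Real.rpow_mul hσ, div_eq_mul_inv]
        push_cast
        ring_nf

theorem esymm_succ_le_choose_mul_rpow {x : Fin n → ℝ} (hx : ∀ i, 0 ≤ x i) {k : ℕ} (hk : k ≠ 0) :
    esymm n (k + 1) x ≤ n.choose (k + 1) * esymm n k x ^ (((k : ℝ) + 1) / k) := by
  calc esymm n (k + 1) x ≤ ∑ _T ∈ powersetCard (k + 1) univ, esymm n k x ^ (((k : ℝ) + 1) / k) :=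
        sum_le_sum fun T hT => prod_le_esymm_rpow hx hk (mem_powersetCard.1 hT).2
    _ = _ := by simp

def patternBox (x : Fin n → ℝ) (S : Finset (Fin n)) : Set (Fin n → ℝ) :=
  Set.univ.pi fun i => if i ∈ S then Set.Ico 0 (x i) else Set.Icc (x i) 1

theorem measurableSet_patternBox (x : Fin n → ℝ) (S : Finset (Fin n)) :
    MeasurableSet (patternBox x S) :=
  MeasurableSet.univ_pi fun i => by split_ifs <;> measurability

theorem volume_real_patternBox {x : Fin n → ℝ} (hx : ∀ i, x i ∈ Set.Icc (0:ℝ) 1)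
    (S : Finset (Fin n)) : volume.real (patternBox x S) = patternWeight x S := by
  have hfactor : ∀ i, volume (if i ∈ S then Set.Ico 0 (x i) else Set.Icc (x i) 1)
      = ENNReal.ofReal (if i ∈ S then x i else 1 - x i) := fun i => by
    split_ifs <;> simp [Real.volume_Ico, Real.volume_Icc]
  rw [measureReal_def, patternBox, volume_pi_pi, prod_congr rfl fun i _ => hfactor i,
    ← ENNReal.ofReal_prod_of_nonneg fun i _ => by split_ifs <;> linarith [(hx i).1, (hx i).2],
    ENNReal.toReal_ofReal (prod_nonneg fun i _ => by split_ifs <;> linarith [(hx i).1, (hx i).2]),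
    prod_ite, patternWeight]
  simp [filter_notMem_eq_sdiff, compl_eq_univ_sdiff]

theorem filter_lt_eq_of_mem_patternBox {x y : Fin n → ℝ} {S : Finset (Fin n)}
    (hy : y ∈ patternBox x S) : univ.filter (fun i => y i < x i) = S := by
  ext i
  have hyi := hy i (Set.mem_univ i)
  by_cases hi : i ∈ S <;> simp only [hi, if_true, if_false] at hyi <;> simp [hi, hyi.1, hyi.2]

theorem patternBox_subset_pi_Icc {x : Fin n → ℝ} (hx : ∀ i, x i ∈ Set.Icc (0:ℝ) 1)
    (S : Finset (Fin n)) : patternBox x S ⊆ Set.univ.pi fun _ => Set.Icc 0 1 := by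
  intro y hy i _
  have hyi := hy i (Set.mem_univ i)
  dsimp only at hyi
  split_ifs at hyi
  · exact ⟨hyi.1, hyi.2.le.trans (hx i).2⟩
  · exact ⟨(hx i).1.trans hyi.1, hyi.2⟩

theorem sum_patternWeight_le_volume_real {x : Fin n → ℝ} (hx : ∀ i, x i ∈ Set.Icc (0:ℝ) 1)
    (k : ℕ) :
    ∑ S with k ≤ S.card, patternWeight x S ≤ volume.real {y : Fin n → ℝ |
      (∀ i, y i ∈ Set.Icc (0:ℝ) 1) ∧ k ≤ (univ.filter (fun i => y i < x i)).card} := by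
  have hcube : volume (Set.univ.pi fun _ : Fin n => Set.Icc (0:ℝ) 1) < ⊤ :=
    (isCompact_univ_pi fun _ => isCompact_Icc).measure_lt_top
  have hdisj : Set.PairwiseDisjoint ↑(univ.filter fun S : Finset (Fin n) => k ≤ S.card)
      (patternBox x) := fun S _ S' _ hne => Set.disjoint_left.2 fun y hy hy' =>
    hne ((filter_lt_eq_of_mem_patternBox hy).symm.trans (filter_lt_eq_of_mem_patternBox hy'))
  have hsub : (⋃ S ∈ univ.filter fun S : Finset (Fin n) => k ≤ S.card, patternBox x S)
      ⊆ {y | (∀ i, y i ∈ Set.Icc (0:ℝ) 1) ∧ k ≤ (univ.filter (fun i => y i < x i)).card} := by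
    simp only [Set.iUnion_subset_iff, mem_filter, mem_univ, true_and]
    exact fun S hS y hy => ⟨fun i => patternBox_subset_pi_Icc hx S hy i (Set.mem_univ i),
      filter_lt_eq_of_mem_patternBox hy ▸ hS⟩
  calc ∑ S with k ≤ S.card, patternWeight x S
      = volume.real (⋃ S ∈ univ.filter fun S : Finset (Fin n) => k ≤ S.card, patternBox x S) := by
        rw [measureReal_biUnion_finset hdisj (fun S _ => measurableSet_patternBox x S)
          fun S _ => ((measure_mono (patternBox_subset_pi_Icc hx S)).trans_lt hcube).ne]
        exact sum_congr rfl fun S _ => (volume_real_patternBox hx S).symm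
    _ ≤ _ := measureReal_mono hsub ((measure_mono fun y hy i _ => hy.1 i).trans_lt hcube).ne

end

theorem Q_ge_esymm_sub (k : ℕ) (hk : 1 ≤ k) (x : Fin (2*k-1) → ℝ)
    (hx : ∀ i, x i ∈ Set.Icc (0:ℝ) 1) :
    esymm (2*k-1) k x - (2:ℝ)^(4*(k:ℝ)-2) * (esymm (2*k-1) k x) ^ (((k:ℝ)+1)/(k:ℝ))
      ≤ Q k x := by
  have hx0 : ∀ i, 0 ≤ x i := fun i => (hx i).1
  have hQ : esymm (2*k-1) k x ≤ Q k x + (k + 1) * esymm (2*k-1) (k+1) x :=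
    (esymm_le_sum_patternWeight_add hx k).trans
      (add_le_add_left (sum_patternWeight_le_volume_real hx k) _)
  have hsucc := mul_le_mul_of_nonneg_left
    (esymm_succ_le_choose_mul_rpow hx0 (Nat.one_le_iff_ne_zero.1 hk)) (by positivity : (0:ℝ) ≤ k + 1)
  have hconst : ((k + 1) * (2*k-1).choose (k+1) : ℝ) ≤ (2:ℝ)^(4*(k:ℝ)-2) := by
    rw [show 4*(k:ℝ)-2 = ((4*k-2 : ℕ) : ℝ) by push_cast [Nat.cast_sub (by omega : 2 ≤ 4*k)]; ring,
      Real.rpow_natCast]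
    exact_mod_cast (Nat.succ_mul_choose_succ_le_two_pow (2*k-1) k).trans
      (Nat.pow_le_pow_right two_pos (by omega))
  have hscaled := mul_le_mul_of_nonneg_right hconst
    (Real.rpow_nonneg (esymm_nonneg hx0 k) (((k:ℝ)+1)/(k:ℝ)))
  linarith
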